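/- arXiv:2004.00350 — 2 statements merged into one kernel-verified Lean document; each statement's English description precedes it below -/
import Mathlib

section
/- Suppose V ≠ 0, the elements X_1, …, X_m span 𝔤 as a real vector space, the only complex subspaces W ⊆ V satisfying ρ(X)W ⊆ W for all X ∈ 𝔤 are W = 0 and W = V, and ρ is not identically zero. Then the self-adjoint operator −Σ_{i=1}^m ρ(X_i)² is positive definite; that is, ⟨−Σ_{i=1}^m ρ(X_i)² v, v⟩ > 0 for every nonzero v ∈ V. -/
/-!
If `v ≠ 0` then, since the `X i` span `𝔤`, some `ρ (X i)` does not kill `v`: otherwise `v` would lie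
in the common kernel of all `ρ x`, an invariant subspace which is proper because `ρ ≠ 0`, hence zero
by irreducibility. Skew-adjointness turns `⟪-∑ ρ(X i)² v, v⟫` into `∑ ‖ρ(X i) v‖²`, which is
therefore positive.
-/

open scoped ComplexOrder

theorem LinearMap.iInf_ker_eq_bot_of_irreducible {ι R M : Type*} [Semiring R]
    [AddCommMonoid M] [Module R M] (T : ι → M →ₗ[R] M)
    (hirr : ∀ W : Submodule R M, (∀ i, ∀ v ∈ W, T i v ∈ W) → W = ⊥ ∨ W = ⊤)
    (hT : ∃ i, T i ≠ 0) :
    ⨅ i, LinearMap.ker (T i) = ⊥ := by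
  have hinv : ∀ i, ∀ v ∈ ⨅ j, LinearMap.ker (T j), T i v ∈ ⨅ j, LinearMap.ker (T j) := by
    intro i v hv
    rw [LinearMap.mem_ker.mp (Submodule.mem_iInf _ |>.mp hv i)]
    exact zero_mem _
  refine (hirr _ hinv).resolve_right fun htop => ?_
  obtain ⟨i, hi⟩ := hT
  refine hi (LinearMap.ext fun v => ?_)
  exact Submodule.mem_iInf _ |>.mp (htop ▸ Submodule.mem_top : v ∈ _) i

theorem LinearMap.iInf_ker_eq_of_span_range_eq_top {ι L R S M : Type*} [CommSemiring R]
    [AddCommMonoid L] [Module R L] [Semiring S] [AddCommMonoid M] [Module S M]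
    [Module R M] [SMulCommClass S R M] (ρ : L →ₗ[R] (M →ₗ[S] M)) {X : ι → L}
    (hspan : Submodule.span R (Set.range X) = ⊤) :
    ⨅ i, LinearMap.ker (ρ (X i)) = ⨅ x, LinearMap.ker (ρ x) := by
  refine le_antisymm (le_iInf fun x v hv => ?_) (le_iInf fun i => iInf_le _ (X i))
  have hx : x ∈ Submodule.span R (Set.range X) := hspan ▸ Submodule.mem_top
  induction hx using Submodule.span_induction with
  | mem y hy =>
    obtain ⟨i, rfl⟩ := hy
    exact Submodule.mem_iInf _ |>.mp hv i
  | zero => simp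
  | add y z _ _ hy hz => simp_all
  | smul c y _ hy => simp_all

theorem inner_neg_sum_comp_self_apply_self {ι V : Type*} [Fintype ι] [NormedAddCommGroup V]
    [InnerProductSpace ℂ V] (T : ι → V →ₗ[ℂ] V)
    (hskew : ∀ i (v w : V), (inner ℂ (T i v) w : ℂ) = -inner ℂ v (T i w)) (v : V) :
    (inner ℂ ((-∑ i, T i ∘ₗ T i) v) v : ℂ) = ((∑ i, ‖T i v‖ ^ 2 : ℝ) : ℂ) := by
  rw [LinearMap.neg_apply, LinearMap.sum_apply, inner_neg_left, sum_inner,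
    ← Finset.sum_neg_distrib]
  push_cast
  refine Finset.sum_congr rfl fun i _ => ?_
  rw [Function.comp_apply, hskew, neg_neg, inner_self_eq_norm_sq_to_K]
  norm_cast

theorem statement10_general {L : Type*} [LieRing L] [LieAlgebra ℝ L]
    {V : Type*} [NormedAddCommGroup V] [InnerProductSpace ℂ V]
    (ρ : L →ₗ[ℝ] (V →ₗ[ℂ] V))
    (hskew : ∀ (x : L) (v w : V), (inner ℂ (ρ x v) w : ℂ) = -inner ℂ v (ρ x w))
    {m : ℕ} (X : Fin m → L) (hspan : Submodule.span ℝ (Set.range X) = ⊤)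
    (hirr : ∀ W : Submodule ℂ V, (∀ (x : L), ∀ v ∈ W, ρ x v ∈ W) → W = ⊥ ∨ W = ⊤)
    (hρ : ∃ x : L, ρ x ≠ 0) :
    ∀ v : V, v ≠ 0 → 0 < (inner ℂ ((-∑ i, ρ (X i) ∘ₗ ρ (X i)) v) v : ℂ) := by
  intro v hv
  obtain ⟨i, hi⟩ : ∃ i, ρ (X i) v ≠ 0 := by
    by_contra! hker
    have hv_mem : v ∈ ⨅ i, LinearMap.ker (ρ (X i)) := Submodule.mem_iInf _ |>.mpr hker
    rw [LinearMap.iInf_ker_eq_of_span_range_eq_top ρ hspan,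
      LinearMap.iInf_ker_eq_bot_of_irreducible _ hirr hρ] at hv_mem
    exact hv ((Submodule.mem_bot ℂ).mp hv_mem)
  rw [inner_neg_sum_comp_self_apply_self _ (fun i => hskew (X i)), Complex.zero_lt_real]
  exact Finset.sum_pos' (fun j _ => by positivity) ⟨i, Finset.mem_univ i, by positivity⟩

/-- Let `𝔤` be a finite-dimensional real Lie algebra and `ρ : 𝔤 → End ℂ V` an
ℝ-linear Lie algebra representation on a nonzero finite-dimensional complex inner
product space `V` by skew-adjoint operators. If `X_1, …, X_m` span `𝔤`, the
representation is irreducible (the only invariant complex subspaces are `0` and `V`),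
and `ρ` is not identically zero, then `-∑ i, ρ(X_i)²` is positive definite:
`⟨-∑ i, ρ(X_i)² v, v⟩ > 0` for every nonzero `v`. -/
theorem statement10 {L : Type*} [LieRing L] [LieAlgebra ℝ L] [FiniteDimensional ℝ L]
    {V : Type*} [NormedAddCommGroup V] [InnerProductSpace ℂ V] [FiniteDimensional ℂ V]
    [Nontrivial V]
    (ρ : L →ₗ[ℝ] (V →ₗ[ℂ] V))
    (hbracket : ∀ x y : L, ρ ⁅x, y⁆ = ρ x ∘ₗ ρ y - ρ y ∘ₗ ρ x)
    (hskew : ∀ (x : L) (v w : V), (inner ℂ (ρ x v) w : ℂ) = -inner ℂ v (ρ x w))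
    {m : ℕ} (X : Fin m → L) (hspan : Submodule.span ℝ (Set.range X) = ⊤)
    (hirr : ∀ W : Submodule ℂ V, (∀ (x : L), ∀ v ∈ W, ρ x v ∈ W) → W = ⊥ ∨ W = ⊤)
    (hρ : ∃ x : L, ρ x ≠ 0) :
    ∀ v : V, v ≠ 0 → 0 < (inner ℂ ((-∑ i, ρ (X i) ∘ₗ ρ (X i)) v) v : ℂ) :=
  statement10_general ρ hskew X hspan hirr hρ
end

section
/- Let Y_1, …, Y_k ∈ 𝔤 be bracket generating, i.e. the smallest Lie subalgebra of 𝔤 containing {Y_1, …, Y_k} is 𝔤 itself. If v ∈ V satisfies Σ_{j=1}^k ρ(Y_j)² v = 0, then ρ(X) v = 0 for all X ∈ 𝔤. -/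
/-! Pairing `∑ j, ρ(Y_j)² v = 0` with `v` and using skew-adjointness gives `∑ j, ‖ρ(Y_j) v‖² = 0`,
so every `Y_j` annihilates `v`. The annihilator of `v` is closed under brackets, hence a Lie
subalgebra; it contains the bracket-generating family, so it is all of `𝔤`. -/

section SkewAdjoint

variable {𝕜 E : Type*} [RCLike 𝕜] [NormedAddCommGroup E] [InnerProductSpace 𝕜 E]

lemma inner_apply_apply_self_of_skew {T : E →ₗ[𝕜] E}
    (hT : ∀ v w : E, inner 𝕜 (T v) w = -inner 𝕜 v (T w)) (v : E) :
    inner 𝕜 (T (T v)) v = -((‖T v‖ ^ 2 : ℝ) : 𝕜) := by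
  rw [hT, inner_self_eq_norm_sq_to_K, RCLike.ofReal_pow]

lemma apply_eq_zero_of_sum_sq_apply_eq_zero_of_skew {ι : Type*} (s : Finset ι)
    {T : ι → E →ₗ[𝕜] E} (hT : ∀ i, ∀ v w : E, inner 𝕜 (T i v) w = -inner 𝕜 v (T i w))
    {v : E} (hv : (∑ i ∈ s, T i ∘ₗ T i) v = 0) :
    ∀ i ∈ s, T i v = 0 := by
  have hsum : ∑ i ∈ s, ‖T i v‖ ^ 2 = 0 := by
    have h := congrArg (fun u => RCLike.re (inner 𝕜 u v)) hv
    simpa [LinearMap.sum_apply, sum_inner, inner_apply_apply_self_of_skew (hT _)] using h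
  intro i hi
  have := (Finset.sum_eq_zero_iff_of_nonneg fun j _ => sq_nonneg ‖T j v‖).mp hsum i hi
  simpa using this

end SkewAdjoint

def LieSubalgebra.annihilator {R A L M : Type*} [CommRing R] [LieRing L] [LieAlgebra R L]
    [Semiring A] [AddCommGroup M] [Module A M] [Module R M] [SMulCommClass A R M]
    (ρ : L →ₗ[R] (M →ₗ[A] M)) (hbracket : ∀ x y : L, ρ ⁅x, y⁆ = ρ x ∘ₗ ρ y - ρ y ∘ₗ ρ x)
    (v : M) : LieSubalgebra R L where
  carrier := {x | ρ x v = 0}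
  add_mem' {a b} ha hb := by simp_all
  zero_mem' := by simp
  smul_mem' c a ha := by simp_all
  lie_mem' {a b} ha hb := by simp_all

theorem statement12_general {L : Type*} [LieRing L] [LieAlgebra ℝ L]
    {V : Type*} [NormedAddCommGroup V] [InnerProductSpace ℂ V]
    (ρ : L →ₗ[ℝ] (V →ₗ[ℂ] V))
    (hbracket : ∀ x y : L, ρ ⁅x, y⁆ = ρ x ∘ₗ ρ y - ρ y ∘ₗ ρ x)
    (hskew : ∀ (x : L) (v w : V), (inner ℂ (ρ x v) w : ℂ) = -inner ℂ v (ρ x w))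
    {k : ℕ} (Y : Fin k → L)
    (hgen : LieSubalgebra.lieSpan ℝ L (Set.range Y) = ⊤)
    (v : V) (hv : (∑ j, ρ (Y j) ∘ₗ ρ (Y j)) v = 0) :
    ∀ x : L, ρ x v = 0 := by
  have hY : ∀ j, ρ (Y j) v = 0 := fun j =>
    apply_eq_zero_of_sum_sq_apply_eq_zero_of_skew Finset.univ (fun j => hskew (Y j)) hv j
      (Finset.mem_univ j)
  have hspan : LieSubalgebra.lieSpan ℝ L (Set.range Y) ≤ LieSubalgebra.annihilator ρ hbracket v :=
    LieSubalgebra.lieSpan_le.mpr <| Set.range_subset_iff.mpr hY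
  intro x
  exact hspan (hgen ▸ LieSubalgebra.mem_top x)

/-- Let `ρ` be an ℝ-linear skew-adjoint Lie algebra representation of a
finite-dimensional real Lie algebra `𝔤` on a finite-dimensional complex inner
product space `V`. If `Y_1, …, Y_k ∈ 𝔤` are bracket generating (the smallest Lie
subalgebra containing them is `𝔤`) and `v ∈ V` satisfies `∑ j, ρ(Y_j)² v = 0`,
then `ρ(X) v = 0` for all `X ∈ 𝔤`. -/
theorem statement12 {L : Type*} [LieRing L] [LieAlgebra ℝ L] [FiniteDimensional ℝ L]
    {V : Type*} [NormedAddCommGroup V] [InnerProductSpace ℂ V] [FiniteDimensional ℂ V]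
    (ρ : L →ₗ[ℝ] (V →ₗ[ℂ] V))
    (hbracket : ∀ x y : L, ρ ⁅x, y⁆ = ρ x ∘ₗ ρ y - ρ y ∘ₗ ρ x)
    (hskew : ∀ (x : L) (v w : V), (inner ℂ (ρ x v) w : ℂ) = -inner ℂ v (ρ x w))
    {k : ℕ} (Y : Fin k → L)
    (hgen : LieSubalgebra.lieSpan ℝ L (Set.range Y) = ⊤)
    (v : V) (hv : (∑ j, ρ (Y j) ∘ₗ ρ (Y j)) v = 0) :
    ∀ x : L, ρ x v = 0 :=
  statement12_general ρ hbracket hskew Y hgen v hv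
end
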